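/- Let n ≥ 2 and let x₁, …, xₙ be real numbers with x₁ + ⋯ + xₙ = 0. Then x₁³ + ⋯ + xₙ³ ≥ -((n-2)/√(n(n-1))) · (x₁² + ⋯ + xₙ²)^{3/2}. -/

import Mathlib

/-!
Write `p = ∑ xᵢ²`, `a = √p / √(n(n-1))` and `M = (n-1)a`. Since the other `n - 1` coordinates
sum to `-xᵢ`, Cauchy–Schwarz gives `n xᵢ² ≤ (n-1)p = n M²`, so every `xᵢ ≥ -M`. Hence
`∑ (xᵢ - a)² (xᵢ + M) ≥ 0`, and expanding with `∑ xᵢ = 0` yields exactly the claimed bound,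
with equality when `n - 1` coordinates equal `a`.
-/

open Finset

variable {ι : Type*} [Fintype ι] {x : ι → ℝ}

theorem card_mul_sq_le_of_sum_eq_zero (hx : ∑ i, x i = 0) (i : ι) :
    Fintype.card ι * x i ^ 2 ≤ (Fintype.card ι - 1) * ∑ j, x j ^ 2 := by
  classical
  have hrest : ∑ j ∈ univ.erase i, x j = -x i := by
    rw [sum_erase_eq_sub (mem_univ i), hx, zero_sub]
  have hrest_sq : ∑ j ∈ univ.erase i, x j ^ 2 = ∑ j, x j ^ 2 - x i ^ 2 :=
    sum_erase_eq_sub (mem_univ i)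
  have hcard : ((univ.erase i).card : ℝ) = Fintype.card ι - 1 := by
    rw [card_erase_of_mem (mem_univ i), card_univ,
      Nat.cast_sub (Fintype.card_pos_iff.mpr ⟨i⟩)]
    norm_num
  have hcs := sq_sum_le_card_mul_sum_sq (s := univ.erase i) (f := x)
  rw [hrest, hrest_sq, hcard, neg_sq] at hcs
  linarith

theorem neg_le_of_sum_eq_zero (hx : ∑ i, x i = 0) (i : ι) {M : ℝ} (hM0 : 0 ≤ M)
    (hM : (Fintype.card ι - 1) * ∑ j, x j ^ 2 ≤ Fintype.card ι * M ^ 2) : -M ≤ x i := by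
  have hcard : (0 : ℝ) < Fintype.card ι := Nat.cast_pos.mpr (Fintype.card_pos_iff.mpr ⟨i⟩)
  have hsq : x i ^ 2 ≤ M ^ 2 :=
    le_of_mul_le_mul_left ((card_mul_sq_le_of_sum_eq_zero hx i).trans hM) hcard
  exact (abs_le_of_sq_le_sq' hsq hM0).1

theorem sub_mul_sum_sq_sub_le_sum_cube (hx : ∑ i, x i = 0) (a : ℝ) {M : ℝ}
    (hM : ∀ i, -M ≤ x i) :
    (2 * a - M) * ∑ i, x i ^ 2 - Fintype.card ι * (a ^ 2 * M) ≤ ∑ i, x i ^ 3 := by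
  have hnonneg : 0 ≤ ∑ i, (x i - a) ^ 2 * (x i + M) :=
    sum_nonneg fun i _ => mul_nonneg (sq_nonneg _) (by linarith [hM i])
  have hexpand : ∑ i, (x i - a) ^ 2 * (x i + M) =
      ∑ i, x i ^ 3 + (M - 2 * a) * ∑ i, x i ^ 2 + (a ^ 2 - 2 * a * M) * ∑ i, x i
        + Fintype.card ι * (a ^ 2 * M) := by
    rw [sum_congr rfl fun i _ => show (x i - a) ^ 2 * (x i + M) =
      x i ^ 3 + (M - 2 * a) * x i ^ 2 + (a ^ 2 - 2 * a * M) * x i + a ^ 2 * M by ring]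
    simp only [sum_add_distrib, ← mul_sum, sum_const, card_univ, nsmul_eq_mul]
    ring
  rw [hx] at hexpand
  linarith

/-- Scalar (eigenvalue) form of the Okumura inequality: if `x₁ + ⋯ + xₙ = 0` (`n ≥ 2`), then
`x₁³ + ⋯ + xₙ³ ≥ -((n-2)/√(n(n-1))) · (x₁² + ⋯ + xₙ²)^(3/2)`. -/
theorem okumura_scalar {n : ℕ} (hn : 2 ≤ n) (x : Fin n → ℝ) (hx : ∑ i, x i = 0) :
    ∑ i, (x i) ^ 3 ≥
      -(((n : ℝ) - 2) / Real.sqrt ((n : ℝ) * ((n : ℝ) - 1))) *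
        (∑ i, (x i) ^ 2) ^ ((3 : ℝ) / 2) := by
  have hnR : (2 : ℝ) ≤ n := by exact_mod_cast hn
  have hp : 0 ≤ ∑ i, x i ^ 2 := sum_nonneg fun i _ => sq_nonneg _
  have hs : Real.sqrt ((n : ℝ) * (n - 1)) ^ 2 = n * (n - 1) := Real.sq_sqrt (by nlinarith)
  have hs0 : 0 < Real.sqrt ((n : ℝ) * (n - 1)) := Real.sqrt_pos.mpr (by nlinarith)
  have hq : Real.sqrt (∑ i, x i ^ 2) ^ 2 = ∑ i, x i ^ 2 := Real.sq_sqrt hp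
  have hq0 : 0 ≤ Real.sqrt (∑ i, x i ^ 2) := Real.sqrt_nonneg _
  rw [Real.rpow_div_two_eq_sqrt 3 hp, Real.rpow_ofNat]
  generalize Real.sqrt ((n : ℝ) * (n - 1)) = s at hs hs0 ⊢
  generalize Real.sqrt (∑ i, x i ^ 2) = q at hq hq0 ⊢
  have hM_sq : n * ((n - 1) * (q / s)) ^ 2 = (n - 1) * q ^ 2 := by
    field_simp
    linear_combination (1 - n) * q ^ 2 * hs
  have hM : ∀ i, -((n - 1) * (q / s)) ≤ x i := fun i =>
    neg_le_of_sum_eq_zero hx i (mul_nonneg (by linarith) (div_nonneg hq0 hs0.le))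
      (by rw [Fintype.card_fin, ← hq, hM_sq])
  have key := sub_mul_sum_sq_sub_le_sum_cube hx (q / s) hM
  rw [Fintype.card_fin, ← hq] at key
  refine le_of_eq_of_le ?_ key
  field_simp
  linear_combination -q ^ 3 * hs
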